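/- Let n+1 ≥ m ≥ 2 and d_1 ≥ d_2 ≥ 2, and let f = Σ_{r=0}^n x_r^{d_1} g_r be a CW-Nagata polynomial of bidegree (d_1,d_2). Then the class of L = X_0 + X_1 + ⋯ + X_n in A_1, where A = T/Ann(f), is a weak Lefschetz element: for every i, the multiplication map ·L: A_i → A_{i+1} has maximal rank, i.e. rank equal to min(dim_K A_i, dim_K A_{i+1}). In particular A has the Weak Lefschetz Property. -/

import Mathlib

/-!
Via `α ↦ α(f)`, the component `A_i` is isomorphic to the space `W_i` of order-`i` partial
derivatives of `f`, and multiplication by `L` becomes `D = ∑ ∂/∂x_r : W_i → W_{i+1}`.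
For `i < d₁` every partial of `f` is a combination of monomials `x_r^a u^β` with `a ≥ 1`, where
`a = 1` only for `x_r u^{g_r}`; `D` sends these to multiples of pairwise distinct monomials
(the `g_r` are distinct), so `D` is injective on `W_i`. For `i ≥ d₁ ≥ d₂` every nonzero partial
`∂^e f` of order `i + 1` is a single monomial with `e_{x_r} ≥ 1`, and it equals `D(∂^{e - x_r} f)`,
so `D` maps `W_i` onto `W_{i+1}`.
-/

open MvPolynomial

namespace CW

variable {σ K : Type*} [CommSemiring K]

/-- A generic "monomial contraction-type" action of the polynomial ring on itself,
determined by a structure coefficient `ν c a` (the coefficient produced when the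
operator monomial with exponent `a` acts on the monomial with exponent `c`). -/
noncomputable def genAct (ν : (σ →₀ ℕ) → (σ →₀ ℕ) → K) (α f : MvPolynomial σ K) :
    MvPolynomial σ K :=
  Finsupp.sum (AddMonoidAlgebra.coeff α) fun a ca =>
    Finsupp.sum (AddMonoidAlgebra.coeff f) fun c cf => monomial (c - a) (ν c a * (ca * cf))

theorem genAct_zero_left (ν : (σ →₀ ℕ) → (σ →₀ ℕ) → K) (f : MvPolynomial σ K) :
    genAct ν 0 f = 0 :=
  Finsupp.sum_zero_index

theorem genAct_zero_right (ν : (σ →₀ ℕ) → (σ →₀ ℕ) → K) (α : MvPolynomial σ K) :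
    genAct ν α 0 = 0 := by
  unfold genAct
  simp only [AddMonoidAlgebra.coeff_zero, Finsupp.sum_zero_index, Finsupp.sum_fun_zero]

theorem genAct_add_left (ν : (σ →₀ ℕ) → (σ →₀ ℕ) → K) (α β f : MvPolynomial σ K) :
    genAct ν (α + β) f = genAct ν α f + genAct ν β f := by
  unfold genAct
  rw [AddMonoidAlgebra.coeff_add]
  apply Finsupp.sum_add_index'
  · intro a
    simp only [mul_zero, zero_mul, map_zero, Finsupp.sum_fun_zero]
  · intro a b₁ b₂
    rw [← Finsupp.sum_add]
    apply Finsupp.sum_congr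
    intro c _
    rw [add_mul, mul_add, map_add]

theorem genAct_add_right (ν : (σ →₀ ℕ) → (σ →₀ ℕ) → K) (α f g : MvPolynomial σ K) :
    genAct ν α (f + g) = genAct ν α f + genAct ν α g := by
  unfold genAct
  rw [← Finsupp.sum_add]
  apply Finsupp.sum_congr
  intro a _
  rw [AddMonoidAlgebra.coeff_add]
  apply Finsupp.sum_add_index'
  · intro c
    simp only [mul_zero, map_zero]
  · intro c c₁ c₂
    rw [mul_add, mul_add, map_add]

theorem genAct_monomial (ν : (σ →₀ ℕ) → (σ →₀ ℕ) → K) (a c : σ →₀ ℕ) (r s : K) :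
    genAct ν (monomial a r) (monomial c s) = monomial (c - a) (ν c a * (r * s)) := by
  unfold genAct
  rw [← single_eq_monomial a r, ← single_eq_monomial c s]
  rw [AddMonoidAlgebra.coeff_single, AddMonoidAlgebra.coeff_single]
  rw [Finsupp.sum_single_index, Finsupp.sum_single_index]
  · simp only [mul_zero, map_zero]
  · simp only [mul_zero, zero_mul, map_zero, Finsupp.sum_fun_zero]

theorem genAct_mul {ν : (σ →₀ ℕ) → (σ →₀ ℕ) → K}
    (hν : ∀ c a b, ν c (a + b) = ν c b * ν (c - b) a) (α β f : MvPolynomial σ K) :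
    genAct ν (α * β) f = genAct ν α (genAct ν β f) := by
  induction α using MvPolynomial.induction_on' with
  | add p q hp hq => rw [add_mul, genAct_add_left, hp, hq, genAct_add_left]
  | monomial a r =>
    induction β using MvPolynomial.induction_on' with
    | add p q hp hq =>
      rw [mul_add, genAct_add_left, hp, hq, ← genAct_add_right, genAct_add_left]
    | monomial b s =>
      induction f using MvPolynomial.induction_on' with
      | add p q hp hq =>
        rw [genAct_add_right, hp, hq, ← genAct_add_right, ← genAct_add_right]
      | monomial c t =>
        rw [monomial_mul, genAct_monomial, genAct_monomial, genAct_monomial,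
          show c - (a + b) = c - b - a from by rw [tsub_tsub, add_comm], hν]
        congr 1
        ring

/-- The annihilator ideal of `f` under the action `genAct ν`. -/
noncomputable def annG (ν : (σ →₀ ℕ) → (σ →₀ ℕ) → K)
    (hν : ∀ c a b, ν c (a + b) = ν c b * ν (c - b) a) (f : MvPolynomial σ K) :
    Ideal (MvPolynomial σ K) where
  carrier := {α | genAct ν α f = 0}
  zero_mem' := genAct_zero_left ν f
  add_mem' := by
    intro a b ha hb
    show genAct ν (a + b) f = 0
    rw [genAct_add_left, ha, hb, add_zero]
  smul_mem' := by
    intro c α hα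
    show genAct ν (c * α) f = 0
    rw [genAct_mul hν, hα, genAct_zero_right]

/-- Structure coefficient of the contraction (apolarity) action: `X^a` sends `x^c`
to `x^(c-a)` if `a ≤ c` and to `0` otherwise. -/
noncomputable def cnu (c a : σ →₀ ℕ) : K :=
  open scoped Classical in if a ≤ c then 1 else 0

theorem cnu_mul (c a b : σ →₀ ℕ) :
    (cnu c (a + b) : K) = cnu c b * cnu (c - b) a := by
  classical
  unfold cnu
  by_cases hb : b ≤ c
  · by_cases ha : a ≤ c - b
    · have h : a + b ≤ c := (le_tsub_iff_right hb).mp ha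
      simp [hb, ha, h]
    · have h : ¬ a + b ≤ c := fun h => ha ((le_tsub_iff_right hb).mpr h)
      simp [hb, ha, h]
  · have h : ¬ a + b ≤ c := fun h => hb (le_trans le_add_self h)
    simp [hb, h]

/-- The contraction action `α ∘ f`. -/
noncomputable def cAct (α f : MvPolynomial σ K) : MvPolynomial σ K :=
  genAct cnu α f

/-- The annihilator `Ann(f)` of `f` under the contraction action, as an ideal. -/
noncomputable def cAnn (f : MvPolynomial σ K) : Ideal (MvPolynomial σ K) :=
  annG cnu cnu_mul f

theorem mem_cAnn {f α : MvPolynomial σ K} : α ∈ cAnn f ↔ cAct α f = 0 := Iff.rfl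

/-- The `K`-submodule of polynomials all of whose monomials satisfy `P`. -/
noncomputable def bihom (K : Type*) [CommSemiring K] {σ : Type*} (P : (σ →₀ ℕ) → Prop) :
    Submodule K (MvPolynomial σ K) where
  carrier := {p | ∀ c ∈ p.support, P c}
  zero_mem' := by
    intro c hc
    simp at hc
  add_mem' := by
    classical
    intro p q hp hq c hc
    rcases Finset.mem_union.mp (MvPolynomial.support_add hc) with h | h
    · exact hp c h
    · exact hq c h
  smul_mem' := by
    intro k p hp c hc
    exact hp c (MvPolynomial.support_smul hc)

/-- The x-degree of an exponent vector. -/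
def degX {n m : ℕ} (c : (Fin (n + 1) ⊕ Fin m) →₀ ℕ) : ℕ := ∑ r, c (Sum.inl r)

/-- The u-degree of an exponent vector. -/
def degU {n m : ℕ} (c : (Fin (n + 1) ⊕ Fin m) →₀ ℕ) : ℕ := ∑ k, c (Sum.inr k)

/-- The bihomogeneous component `T_(i,j)`. -/
noncomputable def Tbi (K : Type*) [CommSemiring K] {n m : ℕ} (i j : ℕ) :
    Submodule K (MvPolynomial (Fin (n + 1) ⊕ Fin m) K) :=
  bihom K fun c => degX c = i ∧ degU c = j

/-- The bigraded component `A_(i,j)` of `A = T ⧸ Ann(f)`: the image of `T_(i,j)`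
in the quotient. -/
noncomputable def Abi {K : Type*} [Field K] {n m : ℕ}
    (f : MvPolynomial (Fin (n + 1) ⊕ Fin m) K) (i j : ℕ) :
    Submodule K (MvPolynomial (Fin (n + 1) ⊕ Fin m) K ⧸ cAnn f) :=
  (Tbi K i j).map (Ideal.Quotient.mkₐ K (cAnn f)).toLinearMap

theorem descFactorial_add_eq (v a b : ℕ) :
    v.descFactorial (a + b) = v.descFactorial b * (v - b).descFactorial a := by
  induction a with
  | zero => simp
  | succ a ih =>
    have h : a + 1 + b = (a + b) + 1 := by omega
    rw [h, Nat.descFactorial_succ, ih, Nat.descFactorial_succ, Nat.sub_sub]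
    ring_nf

/-- Structure coefficient of the differentiation action: the operator monomial `X^a`
sends `x^c` to `(∏ᵢ (cᵢ)(cᵢ-1)⋯(cᵢ-aᵢ+1)) x^(c-a)`. -/
noncomputable def dnu {σ K : Type*} [CommSemiring K] [Fintype σ] (c a : σ →₀ ℕ) : K :=
  ((∏ i, (c i).descFactorial (a i) : ℕ) : K)

theorem dnu_mul {σ K : Type*} [CommSemiring K] [Fintype σ] (c a b : σ →₀ ℕ) :
    (dnu c (a + b) : K) = dnu c b * dnu (c - b) a := by
  unfold dnu
  rw [← Nat.cast_mul, ← Finset.prod_mul_distrib]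
  congr 1
  apply Finset.prod_congr rfl
  intro i _
  rw [Finsupp.add_apply, Finsupp.tsub_apply, descFactorial_add_eq]

/-- The differentiation action `α(f)`, where `X_i` acts as `∂/∂x_i`. -/
noncomputable def dAct {σ K : Type*} [CommSemiring K] [Fintype σ]
    (α f : MvPolynomial σ K) : MvPolynomial σ K :=
  genAct dnu α f

/-- The annihilator `Ann(f)` of `f` under the differentiation action, as an ideal. -/
noncomputable def dAnn {σ K : Type*} [CommSemiring K] [Fintype σ]
    (f : MvPolynomial σ K) : Ideal (MvPolynomial σ K) :=
  annG dnu dnu_mul f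

theorem mem_dAnn {σ K : Type*} [CommSemiring K] [Fintype σ] {f α : MvPolynomial σ K} :
    α ∈ dAnn f ↔ dAct α f = 0 := Iff.rfl

/-- The total-degree-`k` component `A_k` of `A = T ⧸ Ann(f)` (differentiation action):
the image in the quotient of the space of homogeneous operators of order `k`. -/
noncomputable def Adeg {K : Type*} [Field K] {n m : ℕ}
    (f : MvPolynomial (Fin (n + 1) ⊕ Fin m) K) (k : ℕ) :
    Submodule K (MvPolynomial (Fin (n + 1) ⊕ Fin m) K ⧸ dAnn f) :=
  (bihom K fun c => degX c + degU c = k).map (Ideal.Quotient.mkₐ K (dAnn f)).toLinearMap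

section Action

variable {σ K : Type*} [CommSemiring K] (ν : (σ →₀ ℕ) → (σ →₀ ℕ) → K)

theorem genAct_smul_left (k : K) (α f : MvPolynomial σ K) :
    genAct ν (k • α) f = k • genAct ν α f := by
  induction α using MvPolynomial.induction_on' with
  | add p q hp hq => rw [smul_add, genAct_add_left, genAct_add_left, hp, hq, smul_add]
  | monomial a r =>
    induction f using MvPolynomial.induction_on' with
    | add p q hp hq => rw [genAct_add_right, genAct_add_right, hp, hq, smul_add]
    | monomial c s =>
      rw [smul_monomial, genAct_monomial, genAct_monomial, smul_monomial, smul_eq_mul,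
        smul_eq_mul]
      ring_nf

theorem genAct_smul_right (k : K) (α f : MvPolynomial σ K) :
    genAct ν α (k • f) = k • genAct ν α f := by
  induction α using MvPolynomial.induction_on' with
  | add p q hp hq => rw [genAct_add_left, genAct_add_left, hp, hq, smul_add]
  | monomial a r =>
    induction f using MvPolynomial.induction_on' with
    | add p q hp hq => rw [smul_add, genAct_add_right, genAct_add_right, hp, hq, smul_add]
    | monomial c s =>
      rw [smul_monomial, genAct_monomial, genAct_monomial, smul_monomial, smul_eq_mul,
        smul_eq_mul]
      ring_nf

noncomputable def genActₗ : MvPolynomial σ K →ₗ[K] MvPolynomial σ K →ₗ[K] MvPolynomial σ K :=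
  LinearMap.mk₂ K (genAct ν) (genAct_add_left ν) (genAct_smul_left ν) (genAct_add_right ν)
    (genAct_smul_right ν)

@[simp]
theorem genActₗ_apply (α f : MvPolynomial σ K) : genActₗ ν α f = genAct ν α f := rfl

end Action

section Differentiation

variable {σ K : Type*} [Fintype σ]

theorem dnu_eq_zero_iff [CommSemiring K] [CharZero K] (c a : σ →₀ ℕ) :
    (dnu c a : K) = 0 ↔ ¬ a ≤ c := by
  simp only [dnu, Nat.cast_eq_zero, Finset.prod_eq_zero_iff, Finset.mem_univ, true_and,
    Nat.descFactorial_eq_zero_iff_lt, Finsupp.le_def, not_forall, not_le]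

theorem genActₗ_dnu_X_monomial [CommSemiring K] [DecidableEq σ] (s : σ) (c : σ →₀ ℕ) (t : K) :
    genActₗ dnu (X s) (monomial c t) = monomial (c - Finsupp.single s 1) ((c s : K) * t) := by
  rw [X, genActₗ_apply, genAct_monomial, one_mul, dnu, Finset.prod_eq_single s (fun i _ hi => by
    rw [Finsupp.single_eq_of_ne hi, Nat.descFactorial_zero]) (by simp)]
  simp

variable [Field K]

/-- The map `α ↦ α(f)` from operators to polynomials. -/
noncomputable def actOn (f : MvPolynomial σ K) : MvPolynomial σ K →ₗ[K] MvPolynomial σ K :=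
  (genActₗ dnu).flip f

theorem actOn_apply (f α : MvPolynomial σ K) : actOn f α = dAct α f := rfl

theorem actOn_mul (f α β : MvPolynomial σ K) :
    actOn f (α * β) = genActₗ dnu α (actOn f β) :=
  genAct_mul dnu_mul α β f

theorem actOn_sum_monomial {ι : Type*} (s : Finset ι) (E : ι → σ →₀ ℕ) (e : σ →₀ ℕ) (t : K) :
    actOn (∑ r ∈ s, monomial (E r) 1) (monomial e t) =
      ∑ r ∈ s, monomial (E r - e) ((dnu (E r) e : K) * t) := by
  change genActₗ dnu (monomial e t) _ = _
  simp only [map_sum, genActₗ_apply, genAct_monomial, mul_one]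

theorem actOn_sum_monomial_eq_zero [CharZero K] {ι : Type*} (s : Finset ι) (E : ι → σ →₀ ℕ)
    {e : σ →₀ ℕ} (he : ∀ r ∈ s, ¬ e ≤ E r) (t : K) :
    actOn (∑ r ∈ s, monomial (E r) 1) (monomial e t) = 0 := by
  rw [actOn_sum_monomial]
  exact Finset.sum_eq_zero fun r hr => by rw [(dnu_eq_zero_iff _ _).2 (he r hr), zero_mul,
    monomial_zero]

end Differentiation

section LinearAlgebra

open Module

theorem map_eq_range_comp_subtype {R M N : Type*} [Ring R] [AddCommGroup M] [Module R M]
    [AddCommGroup N] [Module R N] (p : Submodule R M) (φ : M →ₗ[R] N) :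
    p.map φ = LinearMap.range (φ ∘ₗ p.subtype) := by
  rw [LinearMap.range_comp, Submodule.range_subtype]

theorem finrank_map_eq_of_ker_eq {R M N N' : Type*} [Ring R] [AddCommGroup M] [Module R M]
    [AddCommGroup N] [Module R N] [AddCommGroup N'] [Module R N'] (p : Submodule R M)
    {φ : M →ₗ[R] N} {ψ : M →ₗ[R] N'} (h : LinearMap.ker φ = LinearMap.ker ψ) :
    finrank R (p.map φ) = finrank R (p.map ψ) := by
  have hker : LinearMap.ker (φ ∘ₗ p.subtype) = LinearMap.ker (ψ ∘ₗ p.subtype) := by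
    rw [LinearMap.ker_comp, LinearMap.ker_comp, h]
  rw [map_eq_range_comp_subtype, map_eq_range_comp_subtype]
  exact ((φ ∘ₗ p.subtype).quotKerEquivRange.symm ≪≫ₗ Submodule.quotEquivOfEq _ _ hker ≪≫ₗ
    (ψ ∘ₗ p.subtype).quotKerEquivRange).finrank_eq

theorem finrank_map_eq_of_disjoint_ker {R M N : Type*} [Ring R] [AddCommGroup M] [Module R M]
    [AddCommGroup N] [Module R N] {p : Submodule R M} {φ : M →ₗ[R] N}
    (h : Disjoint p (LinearMap.ker φ)) : finrank R (p.map φ) = finrank R p := by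
  rw [map_eq_range_comp_subtype]
  refine LinearMap.finrank_range_of_inj ?_
  rwa [← LinearMap.ker_eq_bot, LinearMap.ker_comp, ← Submodule.disjoint_iff_comap_eq_bot]

theorem finrank_map_eq_min {K M : Type*} [DivisionRing K] [AddCommGroup M] [Module K M]
    {V W : Submodule K M} [FiniteDimensional K V] [FiniteDimensional K W] {D : M →ₗ[K] M}
    (hVW : V.map D ≤ W) (h : Disjoint V (LinearMap.ker D) ∨ W ≤ V.map D) :
    finrank K (V.map D) = min (finrank K V) (finrank K W) := by
  rcases h with hinj | hsurj
  · have hV := finrank_map_eq_of_disjoint_ker hinj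
    rw [hV, min_eq_left (hV ▸ Submodule.finrank_mono hVW)]
  · have hW := le_antisymm hVW hsurj
    rw [hW, min_eq_right (hW ▸ Submodule.finrank_map_le D V)]

end LinearAlgebra

section Apolarity

open Module

variable {σ K : Type*} [Fintype σ] [Field K]

theorem ker_mkₐ_dAnn (f : MvPolynomial σ K) :
    LinearMap.ker (Ideal.Quotient.mkₐ K (dAnn f)).toLinearMap = LinearMap.ker (actOn f) := by
  ext α
  simp [Ideal.Quotient.eq_zero_iff_mem, mem_dAnn, actOn_apply]

theorem finrank_map_mkₐ_dAnn (f : MvPolynomial σ K) (p : Submodule K (MvPolynomial σ K)) :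
    finrank K (p.map (Ideal.Quotient.mkₐ K (dAnn f)).toLinearMap) =
      finrank K (p.map (actOn f)) :=
  finrank_map_eq_of_ker_eq p (ker_mkₐ_dAnn f)

theorem finrank_map_mulLeft_mk_dAnn (f L : MvPolynomial σ K)
    (p : Submodule K (MvPolynomial σ K)) :
    finrank K ((p.map (Ideal.Quotient.mkₐ K (dAnn f)).toLinearMap).map
        (LinearMap.mulLeft K (Ideal.Quotient.mk (dAnn f) L))) =
      finrank K ((p.map (actOn f)).map (genActₗ dnu L)) := by
  rw [← Submodule.map_comp, ← Submodule.map_comp]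
  refine finrank_map_eq_of_ker_eq p ?_
  ext α
  simp [Ideal.Quotient.eq_zero_iff_mem, mem_dAnn, ← map_mul, actOn_apply, dAct,
    genAct_mul dnu_mul]

/-- `W_i`: the span of the partial derivatives of order `i` of `f`. -/
noncomputable def derivSpace (f : MvPolynomial σ K) (i : ℕ) : Submodule K (MvPolynomial σ K) :=
  (homogeneousSubmodule σ K i).map (actOn f)

instance (f : MvPolynomial σ K) (i : ℕ) : FiniteDimensional K (derivSpace f i) :=
  haveI : Module.Finite K (homogeneousSubmodule σ K i) :=
    Module.Finite.iff_fg.2 (homogeneousSubmodule_fg σ K i)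
  Module.Finite.map _ _

theorem derivSpace_map_le {L : MvPolynomial σ K} (hL : L ∈ homogeneousSubmodule σ K 1)
    (f : MvPolynomial σ K) (i : ℕ) :
    (derivSpace f i).map (genActₗ dnu L) ≤ derivSpace f (i + 1) := by
  rintro _ ⟨_, ⟨α, hα, rfl⟩, rfl⟩
  refine ⟨L * α, ?_, actOn_mul f L α⟩
  rw [add_comm]
  exact homogeneousSubmodule_mul 1 i (Submodule.mul_mem_mul hL hα)

theorem derivSpace_le_of_monomial {f : MvPolynomial σ K} {i : ℕ}
    {N : Submodule K (MvPolynomial σ K)}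
    (h : ∀ e : σ →₀ ℕ, e.degree = i → actOn f (monomial e 1) ∈ N) : derivSpace f i ≤ N := by
  rw [derivSpace, homogeneousSubmodule_eq_finsupp_supported,
    AddMonoidAlgebra.supported_eq_span_single, Submodule.map_span_le]
  rintro _ ⟨e, he, rfl⟩
  exact h e he

end Apolarity

section Nagata

variable {n m : ℕ}

theorem degree_eq_degX_add_degU (c : (Fin (n + 1) ⊕ Fin m) →₀ ℕ) :
    c.degree = degX c + degU c := by
  rw [Finsupp.degree_eq_sum, Fintype.sum_sum_type]
  rfl

theorem apply_inl_le_degX (c : (Fin (n + 1) ⊕ Fin m) →₀ ℕ) (r : Fin (n + 1)) :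
    c (Sum.inl r) ≤ degX c :=
  Finset.single_le_sum (f := fun s => c (Sum.inl s)) (fun _ _ => Nat.zero_le _) (Finset.mem_univ r)

theorem apply_inr_le_degU (c : (Fin (n + 1) ⊕ Fin m) →₀ ℕ) (k : Fin m) :
    c (Sum.inr k) ≤ degU c :=
  Finset.single_le_sum (f := fun j => c (Sum.inr j)) (fun _ _ => Nat.zero_le _) (Finset.mem_univ k)

theorem bihom_eq_homogeneousSubmodule (K : Type*) [CommSemiring K] (k : ℕ) :
    (bihom K fun c : (Fin (n + 1) ⊕ Fin m) →₀ ℕ => degX c + degU c = k) =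
      homogeneousSubmodule _ K k := by
  rw [homogeneousSubmodule_eq_finsupp_supported]
  ext p
  change (∀ c ∈ p.support, _) ↔ p ∈ restrictSupport K _
  simp [mem_restrictSupport_iff, Set.subset_def, degree_eq_degX_add_degU]

theorem Adeg_eq_map {K : Type*} [Field K] (f : MvPolynomial (Fin (n + 1) ⊕ Fin m) K) (k : ℕ) :
    Adeg f k = (homogeneousSubmodule _ K k).map (Ideal.Quotient.mkₐ K (dAnn f)).toLinearMap := by
  rw [Adeg, bihom_eq_homogeneousSubmodule]

noncomputable def nagataExp (d₁ : ℕ) (g : Fin (n + 1) → Fin m →₀ ℕ) (r : Fin (n + 1)) :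
    (Fin (n + 1) ⊕ Fin m) →₀ ℕ :=
  Finsupp.single (Sum.inl r) d₁ + (g r).mapDomain Sum.inr

variable {d₁ d₂ : ℕ} {g : Fin (n + 1) → Fin m →₀ ℕ}

@[simp]
theorem nagataExp_inl (r s : Fin (n + 1)) :
    nagataExp d₁ g r (Sum.inl s) = if s = r then d₁ else 0 := by
  simp [nagataExp, Finsupp.single_apply, eq_comm,
    Finsupp.mapDomain_of_notMem_range _ _ (by simp : Sum.inl s ∉ Set.range Sum.inr)]

@[simp]
theorem nagataExp_inr (r : Fin (n + 1)) (k : Fin m) : nagataExp d₁ g r (Sum.inr k) = g r k := by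
  simp [nagataExp, Finsupp.mapDomain_apply Sum.inr_injective]

theorem sum_X_pow_mul_monomial_eq (K : Type*) [CommSemiring K] (d₁ : ℕ)
    (g : Fin (n + 1) → Fin m →₀ ℕ) :
    (∑ r, X (Sum.inl r) ^ d₁ * monomial ((g r).mapDomain Sum.inr) 1 :
        MvPolynomial (Fin (n + 1) ⊕ Fin m) K) =
      ∑ r, monomial (nagataExp d₁ g r) 1 := by
  simp only [X_pow_eq_monomial, monomial_mul, one_mul, nagataExp]

theorem apply_inl_eq_zero_of_le_nagataExp {a : (Fin (n + 1) ⊕ Fin m) →₀ ℕ} {r s : Fin (n + 1)}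
    (h : a ≤ nagataExp d₁ g r) (hs : s ≠ r) : a (Sum.inl s) = 0 := by
  simpa [hs] using h (Sum.inl s)

theorem degX_eq_of_le_nagataExp {a : (Fin (n + 1) ⊕ Fin m) →₀ ℕ} {r : Fin (n + 1)}
    (h : a ≤ nagataExp d₁ g r) : degX a = a (Sum.inl r) :=
  Finset.sum_eq_single r (fun s _ hs => apply_inl_eq_zero_of_le_nagataExp h hs) (by simp)

theorem degU_le_of_le_nagataExp (hgdeg : ∀ r, ∑ k, g r k = d₂)
    {a : (Fin (n + 1) ⊕ Fin m) →₀ ℕ} {r : Fin (n + 1)} (h : a ≤ nagataExp d₁ g r) :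
    degU a ≤ d₂ :=
  hgdeg r ▸ Finset.sum_le_sum fun k _ => by simpa using h (Sum.inr k)

theorem eq_of_le_nagataExp (hgdeg : ∀ r, ∑ k, g r k = d₂) (hginj : Function.Injective g)
    {a : (Fin (n + 1) ⊕ Fin m) →₀ ℕ} {r s : Fin (n + 1)} (hr : a ≤ nagataExp d₁ g r)
    (hs : a ≤ nagataExp d₁ g s) (ha : d₂ ≤ degU a) : r = s := by
  have upart : ∀ t, a ≤ nagataExp d₁ g t → ∀ k, a (Sum.inr k) = g t k := fun t ht => by
    have hle : ∀ k, a (Sum.inr k) ≤ g t k := fun k => by simpa using ht (Sum.inr k)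
    have hsum : degU a = ∑ k, g t k :=
      le_antisymm (Finset.sum_le_sum fun k _ => hle k) (hgdeg t ▸ ha)
    exact fun k => (Finset.sum_eq_sum_iff_of_le fun k _ => hle k).1 hsum k (Finset.mem_univ k)
  exact hginj (Finsupp.ext fun k => (upart r hr k).symm.trans (upart s hs k))

theorem eq_of_single_add_le_nagataExp (hgdeg : ∀ r, ∑ k, g r k = d₂)
    (hginj : Function.Injective g) {a : (Fin (n + 1) ⊕ Fin m) →₀ ℕ} {r s t : Fin (n + 1)}
    (ha : d₂ ≤ a.degree) (hr : Finsupp.single (Sum.inl r) 1 + a ≤ nagataExp d₁ g r)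
    (hs : Finsupp.single (Sum.inl s) 1 + a ≤ nagataExp d₁ g t) : s = r := by
  obtain rfl : t = s := by
    by_contra hts
    simpa [Ne.symm hts] using hs (Sum.inl s)
  by_contra hsr
  have har : a ≤ nagataExp d₁ g r := le_trans le_add_self hr
  have has : a ≤ nagataExp d₁ g t := le_trans le_add_self hs
  have hx : degX a = 0 := by
    rw [degX_eq_of_le_nagataExp har, apply_inl_eq_zero_of_le_nagataExp has (Ne.symm hsr)]
  have := degree_eq_degX_add_degU a
  exact hsr (eq_of_le_nagataExp hgdeg hginj has har (by omega))

end Nagata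

section NagataRank

variable {K : Type*} [Field K] [CharZero K] {n m d₁ d₂ : ℕ} {g : Fin (n + 1) → Fin m →₀ ℕ}

/-- The monomials `x^c` (tagged with the only `x`-variable `x_r` they contain) on which
`∑ ∂/∂x_r` is injective; for `i < d₁` they span the `i`-th partials of the Nagata polynomial. -/
def injSupport (g : Fin (n + 1) → Fin m →₀ ℕ) :
    Set (Fin (n + 1) × ((Fin (n + 1) ⊕ Fin m) →₀ ℕ)) :=
  {p | (∀ s ≠ p.1, p.2 (Sum.inl s) = 0) ∧ 0 < p.2 (Sum.inl p.1) ∧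
    (p.2 (Sum.inl p.1) = 1 → ∀ k, p.2 (Sum.inr k) = g p.1 k)}

theorem injOn_injSupport (hginj : Function.Injective g) :
    Set.InjOn (fun p => p.2 - Finsupp.single (Sum.inl p.1) 1) (injSupport g) := by
  rintro ⟨r, c⟩ ⟨hcx, hcpos, hcg⟩ ⟨s, c'⟩ ⟨hc'x, hc'pos, hc'g⟩ h
  simp only at h hcx hcpos hcg hc'x hc'pos hc'g
  by_cases hrs : r = s
  · subst hrs
    rw [tsub_left_inj (Finsupp.single_le_iff.2 hcpos) (Finsupp.single_le_iff.2 hc'pos)] at h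
    rw [h]
  · have hr := DFunLike.congr_fun h (Sum.inl r)
    have hs := DFunLike.congr_fun h (Sum.inl s)
    simp only [Finsupp.coe_tsub, Pi.sub_apply, Finsupp.single_eq_same, Finsupp.single_eq_of_ne,
      ne_eq, Sum.inl.injEq, hrs, Ne.symm hrs, not_false_eq_true, tsub_self, hcx s (Ne.symm hrs),
      hc'x r hrs] at hr hs
    refine absurd (hginj (Finsupp.ext fun k => ?_)) hrs
    have hk := DFunLike.congr_fun h (Sum.inr k)
    simp only [Finsupp.coe_tsub, Pi.sub_apply, ne_eq, reduceCtorEq, not_false_eq_true,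
      Finsupp.single_eq_of_ne, tsub_zero] at hk
    rw [← hcg (by omega) k, ← hc'g (by omega) k, hk]

omit [CharZero K] in
theorem genActₗ_sum_X_monomial_of_mem_injSupport {p : Fin (n + 1) × ((Fin (n + 1) ⊕ Fin m) →₀ ℕ)}
    (hp : p ∈ injSupport g) :
    genActₗ dnu (∑ r, X (Sum.inl r) : MvPolynomial (Fin (n + 1) ⊕ Fin m) K) (monomial p.2 1) =
      (p.2 (Sum.inl p.1) : K) • monomial (p.2 - Finsupp.single (Sum.inl p.1) 1) 1 := by
  rw [map_sum, LinearMap.sum_apply, Finset.sum_eq_single p.1 (fun s _ hs => by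
      rw [genActₗ_dnu_X_monomial, hp.1 s hs, Nat.cast_zero, zero_mul, monomial_zero]) (by simp),
    genActₗ_dnu_X_monomial, smul_monomial, smul_eq_mul, mul_one]

theorem linearIndependent_genActₗ_injSupport (hginj : Function.Injective g) :
    LinearIndependent K (genActₗ dnu (∑ r, X (Sum.inl r) : MvPolynomial (Fin (n + 1) ⊕ Fin m) K) ∘
      fun p : injSupport g => monomial p.1.2 1) := by
  have hpos : ∀ p : injSupport g, (p.1.2 (Sum.inl p.1.1) : K) ≠ 0 := fun p =>
    Nat.cast_ne_zero.2 p.2.2.1.ne'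
  have hfun : (genActₗ dnu (∑ r, X (Sum.inl r)) ∘ fun p : injSupport g => monomial p.1.2 1) =
      (fun p => Units.mk0 _ (hpos p)) •
        (basisMonomials _ K ∘
          (injSupport g).domRestrict fun p => p.2 - Finsupp.single (Sum.inl p.1) 1) := by
    funext p
    rw [Function.comp_apply, genActₗ_sum_X_monomial_of_mem_injSupport p.2]
    simp [coe_basisMonomials, Set.domRestrict]
  rw [hfun]
  exact ((basisMonomials _ K).linearIndependent.comp _
    (injOn_injSupport hginj).injective).units_smul _

theorem mem_injSupport_nagataExp_tsub {e : (Fin (n + 1) ⊕ Fin m) →₀ ℕ} (he : e.degree < d₁)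
    (r : Fin (n + 1)) : (r, nagataExp d₁ g r - e) ∈ injSupport g := by
  have hx := apply_inl_le_degX e r
  have hdeg := degree_eq_degX_add_degU e
  refine ⟨fun s hs => by simp [hs], ?_, fun h1 k => ?_⟩
  · simp only [Finsupp.coe_tsub, Pi.sub_apply, nagataExp_inl, ↓reduceIte, tsub_pos_iff_lt]
    omega
  · have hk := apply_inr_le_degU e k
    simp only [Finsupp.coe_tsub, Pi.sub_apply, nagataExp_inl, ↓reduceIte, nagataExp_inr] at h1 ⊢
    omega

theorem disjoint_derivSpace_nagata_ker (hginj : Function.Injective g) {i : ℕ} (hi : i < d₁) :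
    Disjoint (derivSpace (∑ r, monomial (nagataExp d₁ g r) (1 : K)) i)
      (LinearMap.ker (genActₗ dnu (∑ r, X (Sum.inl r)))) := by
  refine (Submodule.range_ker_disjoint (linearIndependent_genActₗ_injSupport hginj)).mono_left
    (derivSpace_le_of_monomial fun e he => ?_)
  rw [actOn_sum_monomial]
  refine Submodule.sum_mem _ fun r _ => ?_
  rw [← mul_one (_ * _), ← smul_eq_mul, ← smul_monomial]
  exact Submodule.smul_mem _ _
    (Submodule.subset_span ⟨⟨_, mem_injSupport_nagataExp_tsub (he ▸ hi) r⟩, rfl⟩)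

theorem derivSpace_nagata_succ_le_map (hd : d₂ ≤ d₁) (hgdeg : ∀ r, ∑ k, g r k = d₂)
    (hginj : Function.Injective g) {i : ℕ} (hi : d₁ ≤ i) :
    derivSpace (∑ r, monomial (nagataExp d₁ g r) (1 : K)) (i + 1) ≤
      (derivSpace (∑ r, monomial (nagataExp d₁ g r) (1 : K)) i).map
        (genActₗ dnu (∑ r, X (Sum.inl r))) := by
  refine derivSpace_le_of_monomial fun e he => ?_
  by_cases hex : ∃ r, e ≤ nagataExp d₁ g r
  swap
  · push Not at hex
    rw [actOn_sum_monomial_eq_zero _ _ fun r _ => hex r]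
    exact zero_mem _
  obtain ⟨r, hr⟩ := hex
  have hpos : 1 ≤ e (Sum.inl r) := by
    have := degree_eq_degX_add_degU e
    have := degX_eq_of_le_nagataExp hr
    have := degU_le_of_le_nagataExp hgdeg hr
    omega
  obtain ⟨a, rfl⟩ : ∃ a, e = Finsupp.single (Sum.inl r) 1 + a :=
    ⟨_, (add_tsub_cancel_of_le (Finsupp.single_le_iff.2 hpos)).symm⟩
  have ha : a.degree = i := by
    rw [map_add, Finsupp.degree_single] at he
    omega
  refine ⟨_, ⟨monomial a 1, isHomogeneous_monomial _ ha, rfl⟩, ?_⟩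
  rw [← actOn_mul, Finset.sum_mul, map_sum, Finset.sum_eq_single r _ (by simp), X, monomial_mul,
    one_mul]
  intro s _ hs
  rw [X, monomial_mul, one_mul]
  exact actOn_sum_monomial_eq_zero _ _
    (fun t _ ht => hs (eq_of_single_add_le_nagataExp hgdeg hginj (ha ▸ hd.trans hi) hr ht)) _

end NagataRank

open MvPolynomial in
theorem stmt_11_general {K : Type*} [Field K] [CharZero K] (n m d₁ d₂ : ℕ)
    (hd : d₂ ≤ d₁)
    (g : Fin (n + 1) → (Fin m →₀ ℕ))
    (hgdeg : ∀ r, (∑ k, g r k) = d₂)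
    (hginj : Function.Injective g)
    (f : MvPolynomial (Fin (n + 1) ⊕ Fin m) K)
    (hf : f = ∑ r, X (Sum.inl r) ^ d₁ * monomial ((g r).mapDomain Sum.inr) 1)
    (l : MvPolynomial (Fin (n + 1) ⊕ Fin m) K ⧸ dAnn f)
    (hl : l = Ideal.Quotient.mk (dAnn f) (∑ r, X (Sum.inl r))) :
    -- the class of `L = X_0 + ⋯ + X_n` is a weak Lefschetz element: multiplication
    -- by `l` from `A_i` to `A_{i+1}` has maximal rank for every `i`
    l ∈ Adeg f 1 ∧
    (∀ i : ℕ,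
      Module.finrank K ((Adeg f i).map (LinearMap.mulLeft K l)) =
        min (Module.finrank K (Adeg f i)) (Module.finrank K (Adeg f (i + 1)))) ∧
    -- in particular `A` has the Weak Lefschetz Property
    (∃ l' : MvPolynomial (Fin (n + 1) ⊕ Fin m) K ⧸ dAnn f, l' ∈ Adeg f 1 ∧
      ∀ i : ℕ,
        Module.finrank K ((Adeg f i).map (LinearMap.mulLeft K l')) =
          min (Module.finrank K (Adeg f i)) (Module.finrank K (Adeg f (i + 1)))) := by
  have hF : f = ∑ r, monomial (nagataExp d₁ g r) 1 := hf.trans (sum_X_pow_mul_monomial_eq K d₁ g)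
  have hL : (∑ r, X (Sum.inl r) : MvPolynomial (Fin (n + 1) ⊕ Fin m) K) ∈
      homogeneousSubmodule _ K 1 :=
    Submodule.sum_mem _ fun r _ => isHomogeneous_X K _
  have hl₁ : l ∈ Adeg f 1 := by
    rw [hl, Adeg_eq_map]
    exact ⟨_, hL, rfl⟩
  have hrank : ∀ i : ℕ, Module.finrank K ((Adeg f i).map (LinearMap.mulLeft K l)) =
      min (Module.finrank K (Adeg f i)) (Module.finrank K (Adeg f (i + 1))) := by
    intro i
    rw [hl, Adeg_eq_map, Adeg_eq_map, finrank_map_mulLeft_mk_dAnn,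
      finrank_map_mkₐ_dAnn, finrank_map_mkₐ_dAnn]
    change Module.finrank K ((derivSpace f i).map _) =
      min (Module.finrank K (derivSpace f i)) (Module.finrank K (derivSpace f (i + 1)))
    rw [hF]
    exact finrank_map_eq_min (derivSpace_map_le hL _ i) ((lt_or_ge i d₁).imp
      (disjoint_derivSpace_nagata_ker hginj) (derivSpace_nagata_succ_le_map hd hgdeg hginj))
  exact ⟨hl₁, hrank, l, hl₁, hrank⟩

open MvPolynomial in
theorem stmt_11 {K : Type*} [Field K] [CharZero K] (n m d₁ d₂ : ℕ)
    (hmn : m ≤ n + 1) (hm : 2 ≤ m) (hd : d₂ ≤ d₁) (hd₂ : 2 ≤ d₂)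
    (g : Fin (n + 1) → (Fin m →₀ ℕ))
    (hgdeg : ∀ r, (∑ k, g r k) = d₂)
    (hginj : Function.Injective g)
    (f : MvPolynomial (Fin (n + 1) ⊕ Fin m) K)
    (hf : f = ∑ r, X (Sum.inl r) ^ d₁ * monomial ((g r).mapDomain Sum.inr) 1)
    (l : MvPolynomial (Fin (n + 1) ⊕ Fin m) K ⧸ dAnn f)
    (hl : l = Ideal.Quotient.mk (dAnn f) (∑ r, X (Sum.inl r))) :
    -- the class of `L = X_0 + ⋯ + X_n` is a weak Lefschetz element: multiplication
    -- by `l` from `A_i` to `A_{i+1}` has maximal rank for every `i`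
    l ∈ Adeg f 1 ∧
    (∀ i : ℕ,
      Module.finrank K ((Adeg f i).map (LinearMap.mulLeft K l)) =
        min (Module.finrank K (Adeg f i)) (Module.finrank K (Adeg f (i + 1)))) ∧
    -- in particular `A` has the Weak Lefschetz Property
    (∃ l' : MvPolynomial (Fin (n + 1) ⊕ Fin m) K ⧸ dAnn f, l' ∈ Adeg f 1 ∧
      ∀ i : ℕ,
        Module.finrank K ((Adeg f i).map (LinearMap.mulLeft K l')) =
          min (Module.finrank K (Adeg f i)) (Module.finrank K (Adeg f (i + 1)))) :=
  stmt_11_general n m d₁ d₂ hd g hgdeg hginj f hf l hl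

end CW
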